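/- Let G be a finite soluble group that is not nilpotent. If every cyclic subgroup of prime-power order of G is either 𝔑-subnormal in G or 𝔑-abnormal in G, then there exist a prime p and an element x of G such that the cyclic subgroup ⟨x⟩ is a Sylow p-subgroup of G, ⟨x⟩ is 𝔑-abnormal in G, G = G′ ⋊ ⟨x⟩ (i.e. G′⟨x⟩ = G and G′ ∩ ⟨x⟩ = 1), the derived subgroup G′ equals the nilpotent residual G^𝔑 of G, and the subgroup G′⟨x^p⟩ is nilpotent. -/

import Mathlib

variable {G : Type*}

/-- `K` is a maximal subgroup of `L`: `K < L` and there is no subgroup strictly between. -/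
def IsMaximalSubgroupOf [Group G] (K L : Subgroup G) : Prop :=
  K < L ∧ ∀ M : Subgroup G, K < M → M ≤ L → M = L

/-- The quotient of `L` by the normal core of `K` in `L` is nilpotent. -/
def NilpotentQuotByCore [Group G] (K L : Subgroup G) : Prop :=
  Group.IsNilpotent (↥L ⧸ (K.subgroupOf L).normalCore)

/-- The quotient of `L` by the normal core of `K` in `L` has nilpotent derived subgroup
(i.e. belongs to the formation `𝔑𝔄`). -/
def NAQuotByCore [Group G] (K L : Subgroup G) : Prop :=
  Group.IsNilpotent ↥(commutator (↥L ⧸ (K.subgroupOf L).normalCore))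

/-- `H` is `𝔑`-subnormal in `G`: `H = G` or there is a chain
`H = H₀ <· H₁ <· ... <· Hₙ = G` of maximal subgroups with each `Hᵢ/(Hᵢ₋₁)_{Hᵢ}` nilpotent. -/
def NSubnormal [Group G] (H : Subgroup G) : Prop :=
  H = ⊤ ∨ ∃ (n : ℕ) (c : Fin (n + 1) → Subgroup G),
    c 0 = H ∧ c (Fin.last n) = ⊤ ∧
    ∀ i : Fin n, IsMaximalSubgroupOf (c i.castSucc) (c i.succ) ∧
      NilpotentQuotByCore (c i.castSucc) (c i.succ)

/-- `H` is `𝔑𝔄`-subnormal in `G`: `H = G` or there is a chain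
`H = H₀ <· H₁ <· ... <· Hₙ = G` of maximal subgroups with each `Hᵢ/(Hᵢ₋₁)_{Hᵢ}`
having nilpotent derived subgroup. -/
def NASubnormal [Group G] (H : Subgroup G) : Prop :=
  H = ⊤ ∨ ∃ (n : ℕ) (c : Fin (n + 1) → Subgroup G),
    c 0 = H ∧ c (Fin.last n) = ⊤ ∧
    ∀ i : Fin n, IsMaximalSubgroupOf (c i.castSucc) (c i.succ) ∧
      NAQuotByCore (c i.castSucc) (c i.succ)

/-- `H` is `𝔑`-abnormal in `G`: for all `K`, `L` with `H ≤ K` and `K` maximal in `L`,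
the quotient `L/K_L` is not nilpotent. -/
def NAbnormal [Group G] (H : Subgroup G) : Prop :=
  ∀ K L : Subgroup G, H ≤ K → IsMaximalSubgroupOf K L → ¬ NilpotentQuotByCore K L

/-- `H` is `𝔑𝔄`-abnormal in `G`: for all `K`, `L` with `H ≤ K` and `K` maximal in `L`,
the quotient `L/K_L` does not have nilpotent derived subgroup. -/
def NAAbnormal [Group G] (H : Subgroup G) : Prop :=
  ∀ K L : Subgroup G, H ≤ K → IsMaximalSubgroupOf K L → ¬ NAQuotByCore K L

/-- `N` is the nilpotent residual `G^𝔑` of `G`: the smallest normal subgroup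
with nilpotent quotient. -/
def IsNilpotentResidual [Group G] (N : Subgroup G) : Prop :=
  ∃ hN : N.Normal,
    haveI := hN
    Group.IsNilpotent (G ⧸ N) ∧
      ∀ M : Subgroup G, ∀ hM : M.Normal,
        (haveI := hM; Group.IsNilpotent (G ⧸ M)) → N ≤ M

/-- `N` is the `𝔑𝔄`-residual `G^{𝔑𝔄}` of `G`: the smallest normal subgroup whose
quotient has nilpotent derived subgroup. -/
def IsNAResidual [Group G] (N : Subgroup G) : Prop :=
  ∃ hN : N.Normal,
    haveI := hN
    Group.IsNilpotent ↥(commutator (G ⧸ N)) ∧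
      ∀ M : Subgroup G, ∀ hM : M.Normal,
        (haveI := hM; Group.IsNilpotent ↥(commutator (G ⧸ M))) → N ≤ M

/-- `H` is an `𝔑`-projector of `G`: for every normal `N ⊴ G`, the image `HN/N` is a
maximal nilpotent subgroup of `G/N`. -/
def IsNProjector [Group G] (H : Subgroup G) : Prop :=
  ∀ N : Subgroup G, ∀ hN : N.Normal,
    haveI := hN
    Group.IsNilpotent ↥(H.map (QuotientGroup.mk' N)) ∧
      ∀ K : Subgroup (G ⧸ N), Group.IsNilpotent ↥K →
        H.map (QuotientGroup.mk' N) ≤ K → K = H.map (QuotientGroup.mk' N)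


/-!
If every primary cyclic subgroup were `𝔑`-subnormal, hence subnormal, every Sylow subgroup would
contain all elements of its prime power order and `G` would be nilpotent; so some `⟨x⟩` with
`|x| = p ^ k` is `𝔑`-abnormal. An `𝔑`-abnormal subgroup lies in no larger nilpotent subgroup, is
self-normalizing, and supplements every normal subgroup with nilpotent quotient. Hence `⟨x⟩` is a
Sylow subgroup, `G = G'⟨x⟩`, every nilpotent quotient of `G` is cyclic (so `G' = G^𝔑`), and
Burnside's transfer theorem gives `G' ∩ ⟨x⟩ = 1`. Finally `M = G'⟨x^p⟩` is a proper normal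
subgroup with abelian quotient, so no primary cyclic subgroup of `M` is `𝔑`-abnormal; they are
all subnormal and `M` is nilpotent.
-/

open Subgroup

theorem Subgroup.relIndex_dvd_index_of_normal_right {X : Type*} [Group X] [Finite X]
    (A N : Subgroup X) [N.Normal] : A.relIndex N ∣ A.index := by
  have hswap : A.relIndex N * N.index = N.relIndex A * A.index := by
    rw [← inf_relIndex_right A N, relIndex_mul_index inf_le_right, ← inf_relIndex_right N A,
      relIndex_mul_index inf_le_right, inf_comm]
  obtain ⟨c, hc⟩ := relIndex_dvd_index_of_normal N A
  rw [hc, mul_left_comm] at hswap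
  have hpos : 0 < N.relIndex A := Nat.pos_of_ne_zero (N.subgroupOf A).index_ne_zero_of_finite
  exact ⟨c, (Nat.eq_of_mul_eq_mul_left hpos hswap).symm⟩

theorem Sylow.not_dvd_relIndex_of_isSubnormal {p : ℕ} [Fact p.Prime] [Group G] [Finite G]
    (P : Sylow p G) {H : Subgroup G} (hH : H.IsSubnormal) :
    ¬ p ∣ (P : Subgroup G).relIndex H := by
  induction hH with
  | top => rw [relIndex_top_right]; exact P.not_dvd_index
  | step H K hHK _ _ ih =>
    rw [← relIndex_subgroupOf hHK]
    exact fun h => ih (h.trans (relIndex_dvd_index_of_normal_right _ _))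

theorem Subgroup.IsSubnormal.le_sylow {p : ℕ} [Fact p.Prime] [Group G] [Finite G]
    {H : Subgroup G} (hH : H.IsSubnormal) (hHp : IsPGroup p H) (P : Sylow p G) : H ≤ P := by
  rw [← relIndex_eq_one]
  obtain ⟨k, hk⟩ := hHp.exists_card_eq
  have hcop : Nat.Coprime ((P : Subgroup G).relIndex H) (p ^ k) :=
    (Nat.coprime_comm.1 ((Nat.Prime.coprime_iff_not_dvd Fact.out).2
      (P.not_dvd_relIndex_of_isSubnormal hH))).pow_right k
  exact hcop.eq_one_of_dvd (hk ▸ relIndex_dvd_card _ _)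

theorem isPGroup_zpowers_of_orderOf_eq {p k : ℕ} [Group G] {x : G} (hx : orderOf x = p ^ k) :
    IsPGroup p (zpowers x) :=
  IsPGroup.of_card (by rw [Nat.card_zpowers, hx])

theorem Subgroup.isNilpotent_of_isSubnormal_zpowers [Group G] [Finite G] {M : Subgroup G}
    (h : ∀ y ∈ M, (∃ q k : ℕ, q.Prime ∧ orderOf y = q ^ k) → (zpowers y).IsSubnormal) :
    Group.IsNilpotent M := by
  refine (Group.isNilpotent_of_finite_tfae.out 3 0).mp ?_
  intro p _ Q
  obtain ⟨S⟩ : Nonempty (Sylow p G) := inferInstance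
  have hunique : ∀ Q : Sylow p M, (Q : Subgroup M) = (S : Subgroup G).subgroupOf M := by
    intro Q
    refine (Q.is_maximal' (S.isPGroup'.comap_of_injective _ M.subtype_injective) ?_).symm
    intro y hy
    obtain ⟨k, hk⟩ := (IsPGroup.iff_orderOf.1 Q.isPGroup') ⟨y, hy⟩
    have hord : orderOf (y : G) = p ^ k := by simpa using hk
    exact (h y y.2 ⟨p, k, Fact.out, hord⟩).le_sylow (isPGroup_zpowers_of_orderOf_eq hord) S
      (mem_zpowers _)
  have : Subsingleton (Sylow p M) :=
    ⟨fun Q₁ Q₂ => Sylow.ext ((hunique Q₁).trans (hunique Q₂).symm)⟩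
  exact Sylow.normal_of_subsingleton Q

open scoped IsMulCommutative in
theorem isNilpotent_quotient_of_commutator_le {X : Type*} [Group X] {N : Subgroup X} [N.Normal]
    (h : commutator X ≤ N) : Group.IsNilpotent (X ⧸ N) :=
  have := Normal.quotient_commutative_iff_commutator_le.2 h
  inferInstance

theorem commutator_le_of_isCoatom {X : Type*} [Group X] {N : Subgroup X} [N.Normal]
    (hN : IsCoatom N) : commutator X ≤ N := by
  obtain ⟨t, -, ht⟩ := SetLike.exists_of_lt (lt_top_iff_ne_top.2 hN.1)
  exact Normal.commutator_le_of_self_sup_commutative_eq_top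
    (hN.2 _ (left_lt_sup.2 (by rwa [zpowers_le]))) inferInstance

theorem Subgroup.normal_of_isCoatom {X : Type*} [Group X] {K : Subgroup X}
    (hK : IsCoatom K) [Group.IsNilpotent (X ⧸ K.normalCore)] : K.Normal := by
  set φ := QuotientGroup.mk' K.normalCore
  have hφ : Function.Surjective φ := QuotientGroup.mk'_surjective _
  have hK' : (K.map φ).comap φ = K := by
    rw [comap_map_eq, QuotientGroup.ker_mk', sup_eq_left.2 K.normalCore_le]
  have hcoatom : IsCoatom (K.map φ) := by
    refine ⟨fun h => hK.1 (by rw [← hK', h, comap_top]), fun M hM => ?_⟩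
    have : K < M.comap φ := hK'.symm.trans_lt ((comap_lt_comap_of_surjective hφ).2 hM)
    exact comap_injective hφ (by rw [hK.2 _ this, comap_top])
  rw [← hK']
  exact (Group.normalizerCondition_of_isNilpotent.normal_of_coatom _ hcoatom).comap φ

section MaximalSubgroup

variable [Group G] {K L : Subgroup G}

theorem isMaximalSubgroupOf_iff_covBy : IsMaximalSubgroupOf K L ↔ K ⋖ L :=
  ⟨fun h => ⟨h.1, fun M hKM hML => hML.ne (h.2 M hKM hML.le)⟩,
    fun h => ⟨h.1, fun _ hKM hML => hML.eq_of_not_lt (h.2 hKM)⟩⟩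

theorem IsMaximalSubgroupOf.isCoatom_subgroupOf (h : IsMaximalSubgroupOf K L) :
    IsCoatom (K.subgroupOf L) := by
  have hmap : (K.subgroupOf L).map L.subtype = K := by
    rw [subgroupOf_map_subtype, inf_eq_left.2 h.1.le]
  refine ⟨fun htop => h.1.not_ge (subgroupOf_eq_top.1 htop), fun M hM => ?_⟩
  have hKM : K < M.map L.subtype := hmap ▸ map_subtype_lt_map_subtype.2 hM
  apply map_injective L.subtype_injective
  rw [h.2 _ hKM (map_subtype_le M), ← MonoidHom.range_eq_map, range_subtype]

theorem IsMaximalSubgroupOf.normal_subgroupOf (h : IsMaximalSubgroupOf K L)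
    (hq : NilpotentQuotByCore K L) : (K.subgroupOf L).Normal :=
  have : Group.IsNilpotent (L ⧸ (K.subgroupOf L).normalCore) := hq
  normal_of_isCoatom h.isCoatom_subgroupOf

theorem NSubnormal.isSubnormal {H : Subgroup G} (h : NSubnormal H) : H.IsSubnormal := by
  obtain rfl | ⟨n, c, rfl, hlast, hc⟩ := h
  · exact .top
  suffices ∀ i, (c i).IsSubnormal from this 0
  intro i
  induction i using Fin.reverseInduction with
  | last => rw [hlast]; exact .top
  | cast i ih => exact .step _ _ (hc i).1.1.le ih ((hc i).1.normal_subgroupOf (hc i).2)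

theorem nilpotentQuotByCore_of_isNilpotent [Group.IsNilpotent L] : NilpotentQuotByCore K L :=
  inferInstanceAs (Group.IsNilpotent (L ⧸ _))

theorem nilpotentQuotByCore_top_of_le {M : Subgroup G} [M.Normal] [Group.IsNilpotent (G ⧸ M)]
    (hMK : M ≤ K) : NilpotentQuotByCore K ⊤ := by
  let f : G →* (⊤ : Subgroup G) ⧸ (K.subgroupOf ⊤).normalCore :=
    (QuotientGroup.mk' _).comp topEquiv.symm.toMonoidHom
  have hM : M ≤ f.ker := fun g hg => (QuotientGroup.eq_one_iff _).2
    (normal_le_normalCore.2 (comap_mono hMK) (mem_subgroupOf.2 hg))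
  refine Group.nilpotent_of_surjective (QuotientGroup.lift M f hM) ?_
  rintro ⟨q⟩
  exact ⟨QuotientGroup.mk q, rfl⟩

end MaximalSubgroup

open scoped IsMulCommutative in
theorem Sylow.commutator_inf_eq_bot {p : ℕ} [Fact p.Prime] [Group G] [Finite G] (P : Sylow p G)
    (hP : normalizer (P : Set G) ≤ centralizer (P : Set G)) : commutator G ⊓ P = ⊥ := by
  have : IsMulCommutative (P : Subgroup G) :=
    le_centralizer_iff_isMulCommutative.1 (le_normalizer.trans hP)
  have hker : commutator G ≤ (MonoidHom.transferSylow P hP).ker :=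
    Abelianization.commutator_subset_ker _
  exact disjoint_iff.1 ((MonoidHom.ker_transferSylow_disjoint P hP _ P.isPGroup').mono_left hker)

theorem eq_one_of_mem_zpowers_pow {X : Type*} [Group X] {x : X} {p k : ℕ}
    (hx : orderOf x ∣ p ^ k) (hmem : x ∈ zpowers (x ^ p)) : x = 1 := by
  obtain ⟨m, hm⟩ := mem_zpowers_iff.1 hmem
  have hdvd : (orderOf x : ℤ) ∣ p * m - 1 := by
    rw [orderOf_dvd_iff_zpow_eq_one, zpow_sub_one, zpow_mul, zpow_natCast, hm, mul_inv_cancel]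
  have hcop : IsCoprime ((p : ℤ) ^ k) (p * m - 1) :=
    IsCoprime.pow_left ⟨m, -1, by ring⟩
  have := hcop.isUnit_of_dvd' (Int.natCast_dvd_natCast.2 hx |>.trans (by push_cast; rfl)) hdvd
  rwa [Int.isUnit_iff_natAbs_eq, Int.natAbs_natCast, orderOf_eq_one_iff] at this

theorem mem_of_mem_sup_zpowers_pow {X : Type*} [Group X] {N : Subgroup X} [N.Normal] {x : X}
    {p k : ℕ} (hx : orderOf x = p ^ k) (hmem : x ∈ N ⊔ zpowers (x ^ p)) : x ∈ N := by
  rw [← QuotientGroup.eq_one_iff]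
  refine eq_one_of_mem_zpowers_pow (hx ▸ orderOf_map_dvd (QuotientGroup.mk' N) x) ?_
  have := mem_map_of_mem (QuotientGroup.mk' N) hmem
  rwa [Subgroup.map_sup, QuotientGroup.map_mk'_self, bot_sup_eq, MonoidHom.map_zpowers,
    map_pow] at this

section NAbnormal

variable [Group G] [Finite G] {H : Subgroup G}

theorem NAbnormal.eq_of_le_of_isNilpotent (hH : NAbnormal H) {L : Subgroup G} (hHL : H ≤ L)
    [Group.IsNilpotent L] : H = L := by
  by_contra hne
  obtain ⟨K, hHK, hKL⟩ := exists_le_covBy_of_lt (hHL.lt_of_ne hne)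
  exact hH K L hHK (isMaximalSubgroupOf_iff_covBy.2 hKL) nilpotentQuotByCore_of_isNilpotent

open scoped IsMulCommutative in
theorem NAbnormal.ne_bot [Nontrivial G] (hH : NAbnormal H) : H ≠ ⊥ := by
  rintro rfl
  obtain ⟨g, hg⟩ := exists_ne (1 : G)
  exact hg (zpowers_eq_bot.1 (hH.eq_of_le_of_isNilpotent bot_le).symm)

theorem NAbnormal.exists_sylow_eq {p : ℕ} [Fact p.Prime] (hH : NAbnormal H) (hp : IsPGroup p H) :
    ∃ P : Sylow p G, (P : Subgroup G) = H := by
  obtain ⟨P, hHP⟩ := hp.exists_le_sylow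
  have := P.isPGroup'.isNilpotent
  exact ⟨P, (hH.eq_of_le_of_isNilpotent hHP).symm⟩

theorem NAbnormal.sup_eq_top (hH : NAbnormal H) (M : Subgroup G) [M.Normal]
    [Group.IsNilpotent (G ⧸ M)] : H ⊔ M = ⊤ := by
  by_contra hne
  obtain ⟨K, hK, hKtop⟩ := exists_le_covBy_of_lt (lt_top_iff_ne_top.2 hne)
  exact hH K ⊤ (le_sup_left.trans hK) (isMaximalSubgroupOf_iff_covBy.2 hKtop)
    (nilpotentQuotByCore_top_of_le (le_sup_right.trans hK))

theorem NAbnormal.normalizer_eq (hH : NAbnormal H) : normalizer (H : Set G) = H := by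
  by_contra hne
  obtain ⟨T, hHT, hT⟩ := exists_covBy_le_of_lt (le_normalizer.lt_of_ne (Ne.symm hne))
  have hmax := isMaximalSubgroupOf_iff_covBy.2 hHT
  have : (H.subgroupOf T).Normal := (normal_subgroupOf_iff_le_normalizer hHT.le).2 hT
  have :=
    isNilpotent_quotient_of_commutator_le (commutator_le_of_isCoatom hmax.isCoatom_subgroupOf)
  exact hH H T le_rfl hmax
    (Group.nilpotent_of_mulEquiv (QuotientGroup.quotientMulEquivOfEq (normalCore_eq_self _).symm))

theorem NAbnormal.commutator_le {x : G} (hx : NAbnormal (zpowers x)) (M : Subgroup G) [M.Normal]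
    [Group.IsNilpotent (G ⧸ M)] : commutator G ≤ M :=
  Normal.commutator_le_of_self_sup_commutative_eq_top (by rw [sup_comm]; exact hx.sup_eq_top M)
    inferInstance

open scoped IsMulCommutative in
theorem NAbnormal.normalizer_le_centralizer {x : G} (hx : NAbnormal (zpowers x)) :
    normalizer (zpowers x : Set G) ≤ centralizer (zpowers x : Set G) :=
  hx.normalizer_eq.le.trans (le_centralizer_iff_isMulCommutative.2 inferInstance)

end NAbnormal

theorem stmt_8_general [Group G] [Finite G]
    (hG : ¬ Group.IsNilpotent G)
    (h : ∀ x : G, (∃ q k : ℕ, q.Prime ∧ orderOf x = q ^ k) →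
      NSubnormal (Subgroup.zpowers x) ∨ NAbnormal (Subgroup.zpowers x)) :
    ∃ (p : ℕ) (x : G), p.Prime ∧
      (∃ P : Sylow p G, (P : Subgroup G) = Subgroup.zpowers x) ∧
      NAbnormal (Subgroup.zpowers x) ∧
      commutator G ⊔ Subgroup.zpowers x = ⊤ ∧
      commutator G ⊓ Subgroup.zpowers x = ⊥ ∧
      IsNilpotentResidual (commutator G) ∧
      Group.IsNilpotent ↥(commutator G ⊔ Subgroup.zpowers (x ^ p)) := by
  obtain ⟨x, ⟨p, k, hp, hx⟩, hab⟩ : ∃ x : G, (∃ q k : ℕ, q.Prime ∧ orderOf x = q ^ k) ∧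
      NAbnormal (zpowers x) := by
    by_contra! hno
    have := isNilpotent_of_isSubnormal_zpowers (M := ⊤) fun y _ hy =>
      ((h y hy).resolve_right (hno y hy)).isSubnormal
    exact hG (Group.nilpotent_of_mulEquiv topEquiv)
  have : Fact p.Prime := ⟨hp⟩
  have : Nontrivial G := not_subsingleton_iff_nontrivial.1 fun _ => hG inferInstance
  obtain ⟨P, hP⟩ := hab.exists_sylow_eq (isPGroup_zpowers_of_orderOf_eq hx)
  have := isNilpotent_quotient_of_commutator_le (le_refl (commutator G))
  have hsup : commutator G ⊔ zpowers x = ⊤ := by rw [sup_comm]; exact hab.sup_eq_top _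
  have hinf : commutator G ⊓ zpowers x = ⊥ :=
    hP ▸ P.commutator_inf_eq_bot (by rw [← Sylow.coe_coe, hP]; exact hab.normalizer_le_centralizer)
  have hDM : commutator G ≤ commutator G ⊔ zpowers (x ^ p) := le_sup_left
  have := Normal.of_commutator_le (G := G) hDM
  have := isNilpotent_quotient_of_commutator_le hDM
  have hM : commutator G ⊔ zpowers (x ^ p) ≠ ⊤ := by
    intro hM
    have hxM : x ∈ commutator G := mem_of_mem_sup_zpowers_pow hx (by rw [hM]; trivial)
    exact hab.ne_bot (zpowers_eq_bot.2 (by simpa [hinf] using mem_inf.2 ⟨hxM, mem_zpowers x⟩))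
  refine ⟨p, x, hp, ⟨P, hP⟩, hab, hsup, hinf,
    ⟨inferInstance, inferInstance, fun N _ _ => hab.commutator_le N⟩,
    isNilpotent_of_isSubnormal_zpowers fun y hy hprim => ?_⟩
  refine ((h y hprim).resolve_right fun hy' => hM ?_).isSubnormal
  rw [← sup_eq_right.2 (zpowers_le.2 hy)]
  exact hy'.sup_eq_top _

theorem stmt_8 [Group G] [Finite G] [Group.IsSolvable G]
    (hG : ¬ Group.IsNilpotent G)
    (h : ∀ x : G, (∃ q k : ℕ, q.Prime ∧ orderOf x = q ^ k) →
      NSubnormal (Subgroup.zpowers x) ∨ NAbnormal (Subgroup.zpowers x)) :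
    ∃ (p : ℕ) (x : G), p.Prime ∧
      (∃ P : Sylow p G, (P : Subgroup G) = Subgroup.zpowers x) ∧
      NAbnormal (Subgroup.zpowers x) ∧
      commutator G ⊔ Subgroup.zpowers x = ⊤ ∧
      commutator G ⊓ Subgroup.zpowers x = ⊥ ∧
      IsNilpotentResidual (commutator G) ∧
      Group.IsNilpotent ↥(commutator G ⊔ Subgroup.zpowers (x ^ p)) :=
  stmt_8_general hG h
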